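/- arXiv:2010.07765 — 2 statements merged into one kernel-verified Lean document; each statement's English description precedes it below -/
import Mathlib

section
/- Let X be a finite set with pmf p on X × {0,1}, f : X → X̃, and suppose there exists a subset I ⊆ X with p(I) ≥ 1 − δ on which f is injective (f is 'δ-injective'). Then R*_{f(X)} − R*_X ≤ δ, i.e. f is δ-safe. -/
open Finset

/-- Feature marginal of a joint pmf on `X × {0,1}`. -/
noncomputable def marg {X : Type*} (p : X → Bool → ℝ) (x : X) : ℝ := p x false + p x true

/-- Conditional probability `p(y|x)`, with the convention that it is `0`
when the feature marginal vanishes. -/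
noncomputable def condP {X : Type*} (p : X → Bool → ℝ) (x : X) (y : Bool) : ℝ :=
  if marg p x = 0 then 0 else p x y / marg p x

/-- Bayes error `R*_X = ∑_x p(x) (1 - max_y p(y|x))`. -/
noncomputable def bayesError {X : Type*} [Fintype X] (p : X → Bool → ℝ) : ℝ :=
  ∑ x, marg p x * (1 - max (condP p x false) (condP p x true))

/-- Pushforward joint pmf under a deterministic map on the feature coordinate. -/
noncomputable def pushforward {X X' : Type*} [Fintype X] [DecidableEq X']
    (f : X → X') (p : X → Bool → ℝ) (x' : X') (y : Bool) : ℝ :=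
  ∑ x ∈ Finset.univ.filter (fun x => f x = x'), p x y

/-
Since `R*_X = ∑_x (p(x) - max_y p(x, y))` and `f` preserves the total mass, only the sum of
the maxima matters. On `I`, where `f` is injective, each `max_y p(x, y)` is dominated by
`max_y p_f(f x, y)` at a distinct point `f x`; the points outside `I` lose at most
`∑_{x ∉ I} max_y p(x, y) ≤ p(X \ I) ≤ δ`.
-/

section

variable {X X' : Type*} (p : X → Bool → ℝ)

lemma max_le_marg (hp : ∀ x y, 0 ≤ p x y) (x : X) :
    max (p x false) (p x true) ≤ marg p x :=
  max_le (le_add_of_nonneg_right (hp x true)) (le_add_of_nonneg_left (hp x false))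

lemma marg_mul_one_sub_max_condP (hp : ∀ x y, 0 ≤ p x y) (x : X) :
    marg p x * (1 - max (condP p x false) (condP p x true))
      = marg p x - max (p x false) (p x true) := by
  rcases (show 0 ≤ marg p x from add_nonneg (hp x false) (hp x true)).eq_or_lt with h | h
  · rw [marg] at h
    have hfalse : p x false = 0 := by linarith [hp x false, hp x true]
    have htrue : p x true = 0 := by linarith [hp x false, hp x true]
    simp [marg, hfalse, htrue]
  · have hm : marg p x ≠ 0 := h.ne'
    rw [condP, condP, if_neg hm, if_neg hm, max_div_div_right h.le]
    field_simp

lemma bayesError_eq_sum_marg_sub_max [Fintype X] (hp : ∀ x y, 0 ≤ p x y) :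
    bayesError p = ∑ x, (marg p x - max (p x false) (p x true)) :=
  Finset.sum_congr rfl fun x _ => marg_mul_one_sub_max_condP p hp x

variable [Fintype X] [DecidableEq X'] (f : X → X')

lemma pushforward_nonneg (hp : ∀ x y, 0 ≤ p x y) (x' : X') (y : Bool) :
    0 ≤ pushforward f p x' y :=
  Finset.sum_nonneg fun x _ => hp x y

lemma le_pushforward_apply (hp : ∀ x y, 0 ≤ p x y) (x : X) (y : Bool) :
    p x y ≤ pushforward f p (f x) y :=
  Finset.single_le_sum (fun x _ => hp x y) (by simp)

lemma marg_pushforward (x' : X') :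
    marg (pushforward f p) x' = ∑ x ∈ univ.filter (fun x => f x = x'), marg p x :=
  (Finset.sum_add_distrib).symm

lemma sum_marg_pushforward [Fintype X'] :
    ∑ x', marg (pushforward f p) x' = ∑ x, marg p x := by
  simp_rw [marg_pushforward]
  exact Finset.sum_fiberwise univ f (marg p)

lemma sum_max_le_sum_max_pushforward_of_injOn [Fintype X'] (hp : ∀ x y, 0 ≤ p x y)
    {I : Finset X} (hinj : Set.InjOn f I) :
    ∑ x ∈ I, max (p x false) (p x true)
      ≤ ∑ x', max (pushforward f p x' false) (pushforward f p x' true) := by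
  set q := pushforward f p
  calc ∑ x ∈ I, max (p x false) (p x true)
      ≤ ∑ x ∈ I, max (q (f x) false) (q (f x) true) :=
        Finset.sum_le_sum fun x _ =>
          max_le_max (le_pushforward_apply p f hp x false) (le_pushforward_apply p f hp x true)
    _ = ∑ x' ∈ I.image f, max (q x' false) (q x' true) := by rw [Finset.sum_image hinj]
    _ ≤ ∑ x', max (q x' false) (q x' true) :=
        Finset.sum_le_univ_sum_of_nonneg fun x' =>
          le_max_of_le_left (pushforward_nonneg p f hp x' false)

lemma bayesError_pushforward_sub_le [Fintype X'] (hp : ∀ x y, 0 ≤ p x y)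
    {I : Finset X} (hinj : Set.InjOn f I) :
    bayesError (pushforward f p) - bayesError p ≤ ∑ x, marg p x - ∑ x ∈ I, marg p x := by
  classical
  have hmax := sum_max_le_sum_max_pushforward_of_injOn p f hp hinj
  have hcompl : ∑ x ∈ Iᶜ, max (p x false) (p x true) ≤ ∑ x ∈ Iᶜ, marg p x :=
    Finset.sum_le_sum fun x _ => max_le_marg p hp x
  have hsplit := Finset.sum_add_sum_compl I fun x => max (p x false) (p x true)
  have hsplit_marg := Finset.sum_add_sum_compl I (marg p)
  rw [bayesError_eq_sum_marg_sub_max p hp,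
    bayesError_eq_sum_marg_sub_max _ (pushforward_nonneg p f hp),
    Finset.sum_sub_distrib, Finset.sum_sub_distrib, sum_marg_pushforward]
  linarith

end

theorem bayesError_pushforward_of_deltaInjective_general {X X' : Type*} [Fintype X] [Fintype X']
    [DecidableEq X'] (p : X → Bool → ℝ) (hp : ∀ x y, 0 ≤ p x y)
    (hsum : ∑ x, ∑ y, p x y = 1) (f : X → X') (δ : ℝ)
    (I : Finset X) (hinj : Set.InjOn f I) (hI : 1 - δ ≤ ∑ x ∈ I, marg p x) :
    bayesError (pushforward f p) - bayesError p ≤ δ := by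
  have htotal : ∑ x, marg p x = 1 := by simpa [marg, Fintype.sum_bool, add_comm] using hsum
  linarith [bayesError_pushforward_sub_le p f hp hinj]

/-- A δ-injective transformation is δ-safe. -/
theorem bayesError_pushforward_of_deltaInjective {X X' : Type*} [Fintype X] [Fintype X']
    [DecidableEq X'] (p : X → Bool → ℝ) (hp : ∀ x y, 0 ≤ p x y)
    (hsum : ∑ x, ∑ y, p x y = 1) (f : X → X') (δ : ℝ) (hδ0 : 0 ≤ δ) (hδ1 : δ ≤ 1)
    (I : Finset X) (hinj : Set.InjOn f I) (hI : 1 - δ ≤ ∑ x ∈ I, marg p x) :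
    bayesError (pushforward f p) - bayesError p ≤ δ :=
  bayesError_pushforward_of_deltaInjective_general p hp hsum f δ I hinj hI
end

section
/- Let g : X → ℝ be L-Lipschitz, X, X' i.i.d. random variables on a metric space, η : X → [0,1] measurable, and let L_{g,X}(id) = E[(g(X) − η(X))²]. Then for any ε > 0, P(|η(X) − η(X')| ≤ ε + L·d(X,X')) ≥ 1 − 8·L_{g,X}(id)/ε². That is, η is (ε, 8L_{g,X}(id)/ε², L)-probably Lipschitz. -/
/-!
Compare `η` with the Lipschitz function `g`. On the set `G` where `|g - η| ≤ ε / 2` the triangle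
inequality through `g` gives `|η x - η x'| ≤ ε + L d(x, x')`, and by Markov's inequality for
`(g - η)²` the complement of `G` has probability at most `4 V / ε²`, where `V = E[(g - η)²]`.
By independence the pair lies in `G ×ˢ G` with probability at least
`(1 - 4 V / ε²)² ≥ 1 - 8 V / ε²`.
-/

open MeasureTheory

theorem abs_sub_le_of_lipschitzWith_of_abs_sub_le {α : Type*} [PseudoMetricSpace α]
    {g η : α → ℝ} {L : NNReal} (hg : LipschitzWith L g) {δ : ℝ} {x y : α}
    (hx : |g x - η x| ≤ δ) (hy : |g y - η y| ≤ δ) :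
    |η x - η y| ≤ 2 * δ + L * dist x y := by
  have hgxy : |g x - g y| ≤ L * dist x y := hg.dist_le_mul x y
  calc |η x - η y| ≤ |η x - g x| + |g x - g y| + |g y - η y| :=
        (abs_sub_le _ (g y) _).trans (by gcongr; exact abs_sub_le _ _ _)
    _ ≤ δ + L * dist x y + δ := by
        rw [abs_sub_comm (η x)]
        gcongr
    _ = 2 * δ + L * dist x y := by ring

theorem measure_le_abs_le_ofReal_integral_sq_div {α : Type*} [MeasurableSpace α]
    {μ : Measure α} [IsFiniteMeasure μ] {f : α → ℝ} (hf : Integrable (fun x => f x ^ 2) μ)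
    {t : ℝ} (ht : 0 < t) :
    μ {x | t ≤ |f x|} ≤ ENNReal.ofReal ((∫ x, f x ^ 2 ∂μ) / t ^ 2) := by
  have hset : {x | t ≤ |f x|} = {x | t ^ 2 ≤ f x ^ 2} := by
    ext x
    simp only [Set.mem_ofPred_eq, sq_le_sq, abs_of_pos ht]
  have hmarkov := mul_meas_ge_le_integral_of_nonneg
    (Filter.Eventually.of_forall fun x => sq_nonneg (f x)) hf (t ^ 2)
  rw [hset, ← ofReal_measureReal]
  exact ENNReal.ofReal_le_ofReal ((le_div_iff₀ (by positivity)).2 (by linarith))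

theorem ofReal_one_sub_le_measure_of_measure_compl_le {α : Type*} [MeasurableSpace α]
    {μ : Measure α} [IsProbabilityMeasure μ] {s : Set α} {b : ℝ} (hb : 0 ≤ b)
    (hs : μ sᶜ ≤ ENNReal.ofReal b) :
    ENNReal.ofReal (1 - b) ≤ μ s := by
  have hcover : 1 ≤ μ s + ENNReal.ofReal b := by
    simpa using (measure_univ_le_add_compl s (μ := μ)).trans (by gcongr)
  rw [ENNReal.ofReal_sub _ hb, ENNReal.ofReal_one]
  exact tsub_le_iff_right.2 hcover

theorem ofReal_one_sub_two_mul_le_prod_prod_self {α : Type*} [MeasurableSpace α]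
    {μ : Measure α} [IsProbabilityMeasure μ] {s : Set α} {b : ℝ} (hb : 0 ≤ b)
    (hs : μ sᶜ ≤ ENNReal.ofReal b) :
    ENNReal.ofReal (1 - 2 * b) ≤ (μ.prod μ) (s ×ˢ s) := by
  rcases le_or_gt b 1 with hb1 | hb1
  · have hs' := ofReal_one_sub_le_measure_of_measure_compl_le hb hs
    calc ENNReal.ofReal (1 - 2 * b) ≤ ENNReal.ofReal ((1 - b) * (1 - b)) :=
          ENNReal.ofReal_le_ofReal (by nlinarith)
      _ = ENNReal.ofReal (1 - b) * ENNReal.ofReal (1 - b) :=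
          ENNReal.ofReal_mul (by linarith)
      _ ≤ μ s * μ s := mul_le_mul' hs' hs'
      _ = (μ.prod μ) (s ×ˢ s) := (Measure.prod_prod s s).symm
  · rw [ENNReal.ofReal_of_nonpos (by linarith)]
    exact zero_le

theorem probably_lipschitz_general {α : Type*} [MetricSpace α] [MeasurableSpace α]
    (μ : Measure α) [IsProbabilityMeasure μ] (g η : α → ℝ) (L : NNReal)
    (hg : LipschitzWith L g)
    (hint : Integrable (fun x => (g x - η x) ^ 2) μ) (ε : ℝ) (hε : 0 < ε) :
    ENNReal.ofReal (1 - 8 * (∫ x, (g x - η x) ^ 2 ∂μ) / ε ^ 2) ≤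
      (μ.prod μ) {q : α × α | |η q.1 - η q.2| ≤ ε + L * dist q.1 q.2} := by
  set V := ∫ x, (g x - η x) ^ 2 ∂μ
  set G := {x | |g x - η x| ≤ ε / 2}
  have hGc : μ Gᶜ ≤ ENNReal.ofReal (V / (ε / 2) ^ 2) := by
    refine (measure_mono fun x (hx : ¬|g x - η x| ≤ ε / 2) => (not_le.1 hx).le).trans ?_
    exact measure_le_abs_le_ofReal_integral_sq_div hint (half_pos hε)
  have hpair : G ×ˢ G ⊆ {q : α × α | |η q.1 - η q.2| ≤ ε + L * dist q.1 q.2} := by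
    rintro ⟨x, y⟩ ⟨hx, hy⟩
    have := abs_sub_le_of_lipschitzWith_of_abs_sub_le hg hx hy
    rwa [mul_div_cancel₀ ε two_ne_zero] at this
  have hconst : 8 * V / ε ^ 2 = 2 * (V / (ε / 2) ^ 2) := by
    field_simp
    ring
  rw [hconst]
  exact (ofReal_one_sub_two_mul_le_prod_prod_self
    (div_nonneg (integral_nonneg fun x => sq_nonneg _) (sq_nonneg _)) hGc).trans (measure_mono hpair)

/-- If `g` is `L`-Lipschitz and `E[(g(X) - η(X))²] = V`, then `η` is
`(ε, 8V/ε², L)`-probably Lipschitz for `X, X'` i.i.d. -/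
theorem probably_lipschitz {α : Type*} [MetricSpace α] [MeasurableSpace α] [BorelSpace α]
    (μ : Measure α) [IsProbabilityMeasure μ] (g η : α → ℝ) (L : NNReal)
    (hg : LipschitzWith L g) (hη : Measurable η) (hη01 : ∀ x, η x ∈ Set.Icc (0 : ℝ) 1)
    (hint : Integrable (fun x => (g x - η x) ^ 2) μ) (ε : ℝ) (hε : 0 < ε) :
    ENNReal.ofReal (1 - 8 * (∫ x, (g x - η x) ^ 2 ∂μ) / ε ^ 2) ≤
      (μ.prod μ) {q : α × α | |η q.1 - η q.2| ≤ ε + L * dist q.1 q.2} :=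
  probably_lipschitz_general μ g η L hg hint ε hε
end
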